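/- If a contiguous sublist of a list A over {-1,+1} has sum equal to the total number of +1 entries of A, then all +1 entries of A occur in consecutive positions. -/
import Mathlib

lemma sum_eq_counts (l : List ℤ) (h : ∀ x ∈ l, x = 1 ∨ x = -1) :
    l.sum = (l.count 1 : ℤ) - (l.count (-1) : ℤ) := by
  induction l with
  | nil => simp
  | cons a t ih =>
    have ht := ih (fun x hx => h x (by simp [hx]))
    rcases h a (by simp) with rfl | rfl <;>
      simp [List.count_cons, ht] <;> ring

/-- If some contiguous sublist of a sign sequence `A` has sum equal to the
total number of `+1` entries of `A`, then all `+1` entries of `A` are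
consecutive. -/
theorem stmt5 (A : List ℤ) (hsign : ∀ x ∈ A, x = 1 ∨ x = -1)
    (h : ∃ l : List ℤ, l <:+: A ∧ l.sum = (A.count 1 : ℤ)) :
    ∃ l₁ l₃ : List ℤ,
      A = l₁ ++ List.replicate (A.count 1) (1 : ℤ) ++ l₃ ∧
        l₁.count 1 = 0 ∧ l₃.count 1 = 0 := by
  obtain ⟨l, hinf, hsum⟩ := h
  have hsubl : l.Sublist A := hinf.sublist
  have hlsign : ∀ x ∈ l, x = 1 ∨ x = -1 := fun x hx => hsign x (hsubl.mem hx)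
  have hle : l.count 1 ≤ A.count 1 := hsubl.count_le 1
  have hkey := sum_eq_counts l hlsign
  rw [hsum] at hkey
  have hneg : l.count (-1) = 0 := by omega
  have hcount : l.count 1 = A.count 1 := by omega
  have hall : ∀ x ∈ l, x = 1 := by
    intro x hx
    rcases hlsign x hx with rfl | rfl
    · rfl
    · exact absurd (List.count_pos_iff.mpr hx) (by omega)
  have hrep : l = List.replicate (A.count 1) 1 := by
    rw [List.eq_replicate_iff]
    refine ⟨?_, hall⟩
    rw [← hcount, List.count_eq_length.mpr (fun b hb => (hall b hb).symm)]
  obtain ⟨l₁, l₃, rfl⟩ := hinf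
  refine ⟨l₁, l₃, by rw [← hrep], ?_, ?_⟩ <;>
  · have := hcount
    simp [List.count_append] at this ⊢
    omega
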